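/- Let E ⊂ ℝ^d and let f : E → P¹(ℝ^d,ℝ) be a 1-field. Then for all x,y ∈ E with x ≠ y, B(f;x,y) ≤ Γ¹(f;x,y); that is, ‖D_xf − D_yf‖ ≤ Γ¹(f;x,y)·‖x−y‖. In particular, if Γ¹(f;E) < ∞ then ‖D_xf − D_yf‖ ≤ Γ¹(f;E)·‖x−y‖ for all x,y ∈ E, so the gradient part x ↦ D_xf is Lipschitz on E. -/

import Mathlib

open scoped ENNReal RealInnerProductSpace
open Metric Set

/-- A 1-field assigns to each point `x` the pair `(f_x, D_xf)` representing the affine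
polynomial `a ↦ f_x + ⟪D_xf, a - x⟫`; `eval1 f x a` is the evaluation `f(x)(a)`. -/
noncomputable def eval1 {d : ℕ} (f : EuclideanSpace ℝ (Fin d) → ℝ × EuclideanSpace ℝ (Fin d))
    (x a : EuclideanSpace ℝ (Fin d)) : ℝ :=
  (f x).1 + ⟪(f x).2, a - x⟫

/-- `Γ¹(f;x,y) = 2 sup_a |f(x)(a) - f(y)(a)| / (‖x-a‖² + ‖y-a‖²)`. -/
noncomputable def gamma1 {d : ℕ} (f : EuclideanSpace ℝ (Fin d) → ℝ × EuclideanSpace ℝ (Fin d))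
    (x y : EuclideanSpace ℝ (Fin d)) : ℝ :=
  2 * ⨆ a : EuclideanSpace ℝ (Fin d),
    |eval1 f x a - eval1 f y a| / (‖x - a‖ ^ 2 + ‖y - a‖ ^ 2)

/-- `Γ¹(f;D) = sup {Γ¹(f;x,y) : x,y ∈ D, x ≠ y}`, valued in `[0,∞]`. -/
noncomputable def gamma1On {d : ℕ} (f : EuclideanSpace ℝ (Fin d) → ℝ × EuclideanSpace ℝ (Fin d))
    (D : Set (EuclideanSpace ℝ (Fin d))) : ℝ≥0∞ :=
  ⨆ x ∈ D, ⨆ y ∈ D, ⨆ (_ : x ≠ y), ENNReal.ofReal (gamma1 f x y)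

/-- `A(f;x,y) = (2(f_x - f_y) + ⟪D_xf + D_yf, y - x⟫) / ‖x-y‖²`. -/
noncomputable def Afun {d : ℕ} (f : EuclideanSpace ℝ (Fin d) → ℝ × EuclideanSpace ℝ (Fin d))
    (x y : EuclideanSpace ℝ (Fin d)) : ℝ :=
  (2 * ((f x).1 - (f y).1) + ⟪(f x).2 + (f y).2, y - x⟫) / ‖x - y‖ ^ 2

set_option maxHeartbeats 1000000 in
private theorem grad_aux {d : ℕ}
    (f : EuclideanSpace ℝ (Fin d) → ℝ × EuclideanSpace ℝ (Fin d)) :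
    ∀ x y : EuclideanSpace ℝ (Fin d), x ≠ y →
      ‖(f x).2 - (f y).2‖ ≤ gamma1 f x y * ‖x - y‖ := by
  intro x y hxy
  obtain ⟨p, hp⟩ : ∃ p, p = (f x).2 := ⟨_, rfl⟩
  obtain ⟨q, hq⟩ : ∃ q, q = (f y).2 := ⟨_, rfl⟩
  obtain ⟨u, hu⟩ : ∃ u : EuclideanSpace ℝ (Fin d), u = p - q := ⟨_, rfl⟩
  obtain ⟨c, hc⟩ : ∃ c : ℝ, c = ‖x - y‖ := ⟨_, rfl⟩
  obtain ⟨g, hg⟩ : ∃ g : EuclideanSpace ℝ (Fin d) → ℝ,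
      g = fun a => |eval1 f x a - eval1 f y a| / (‖x - a‖ ^ 2 + ‖y - a‖ ^ 2) :=
    ⟨_, rfl⟩
  have hgval : ∀ a, g a = |eval1 f x a - eval1 f y a| / (‖x - a‖ ^ 2 + ‖y - a‖ ^ 2) := by
    intro a; rw [hg]
  have hc0 : 0 < c := by
    rw [hc, norm_pos_iff]
    exact sub_ne_zero.mpr hxy
  have hgamma : gamma1 f x y = 2 * ⨆ a, g a := by
    rw [hg]; rfl
  have hpq : ‖(f x).2 - (f y).2‖ = ‖u‖ := by rw [hu, hp, hq]
  rw [hpq, hgamma, ← hc]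
  -- denominator lower bound
  have hden : ∀ a : EuclideanSpace ℝ (Fin d),
      c ^ 2 / 2 ≤ ‖x - a‖ ^ 2 + ‖y - a‖ ^ 2 := by
    intro a
    have h1 : c ≤ ‖x - a‖ + ‖y - a‖ := by
      have h2 : x - y = (x - a) - (y - a) := by abel
      rw [hc, h2]
      exact norm_sub_le _ _
    nlinarith [sq_nonneg (‖x - a‖ - ‖y - a‖), norm_nonneg (x - a), norm_nonneg (y - a),
      hc0.le]
  have hdenpos : ∀ a : EuclideanSpace ℝ (Fin d),
      0 < ‖x - a‖ ^ 2 + ‖y - a‖ ^ 2 := fun a => lt_of_lt_of_le (by positivity) (hden a)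
  have hgnonneg : ∀ a, 0 ≤ g a := by
    intro a
    rw [hgval a]
    exact div_nonneg (abs_nonneg _) (hdenpos a).le
  -- numerator bound
  have hnum : ∀ a : EuclideanSpace ℝ (Fin d),
      |eval1 f x a - eval1 f y a| ≤
        |(f x).1 - (f y).1| + (‖p‖ + ‖q‖) * (‖x - a‖ + ‖y - a‖) := by
    intro a
    have he : eval1 f x a - eval1 f y a
        = ((f x).1 - (f y).1) + (⟪p, a - x⟫ - ⟪q, a - y⟫) := by
      simp [eval1, hp, hq]; ring
    rw [he]
    have h2 : |⟪p, a - x⟫| ≤ ‖p‖ * ‖x - a‖ := by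
      rw [← norm_sub_rev]
      exact abs_real_inner_le_norm _ _
    have h3 : |⟪q, a - y⟫| ≤ ‖q‖ * ‖y - a‖ := by
      rw [← norm_sub_rev]
      exact abs_real_inner_le_norm _ _
    have h5 := abs_add_le ((f x).1 - (f y).1) (⟪p, a - x⟫ - ⟪q, a - y⟫)
    have h4 := abs_sub (⟪p, a - x⟫ : ℝ) ⟪q, a - y⟫
    nlinarith [norm_nonneg p, norm_nonneg q, norm_nonneg (x - a), norm_nonneg (y - a)]
  -- uniform bound on g
  obtain ⟨M, hM⟩ : ∃ M : ℝ,
      M = |(f x).1 - (f y).1| / (c ^ 2 / 2) + 2 * (‖p‖ + ‖q‖) / c := ⟨_, rfl⟩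
  have hgM : ∀ a, g a ≤ M := by
    intro a
    obtain ⟨s, hs⟩ : ∃ s : ℝ, s = ‖x - a‖ + ‖y - a‖ := ⟨_, rfl⟩
    obtain ⟨D, hD⟩ : ∃ D : ℝ, D = ‖x - a‖ ^ 2 + ‖y - a‖ ^ 2 := ⟨_, rfl⟩
    have hDpos : 0 < D := by rw [hD]; exact hdenpos a
    have hsc : c ≤ s := by
      have h2 : x - y = (x - a) - (y - a) := by abel
      rw [hc, h2, hs]; exact norm_sub_le _ _
    have hs2 : s ^ 2 ≤ 2 * D := by
      rw [hs, hD]; nlinarith [sq_nonneg (‖x - a‖ - ‖y - a‖)]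
    have h1 : g a ≤ (|(f x).1 - (f y).1| + (‖p‖ + ‖q‖) * s) / D := by
      rw [hgval a, ← hD, hs]
      exact (div_le_div_iff_of_pos_right hDpos).mpr (hnum a)
    have h3 : |(f x).1 - (f y).1| / D ≤ |(f x).1 - (f y).1| / (c ^ 2 / 2) := by
      rw [hD]
      exact div_le_div_of_nonneg_left (abs_nonneg _) (by positivity) (hden a)
    have h4 : (‖p‖ + ‖q‖) * s / D ≤ 2 * (‖p‖ + ‖q‖) / c := by
      rw [div_le_div_iff₀ hDpos hc0]
      have hK : (0:ℝ) ≤ ‖p‖ + ‖q‖ := by positivity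
      have hspos : 0 < s := lt_of_lt_of_le hc0 hsc
      have key1 : s * c ≤ 2 * D := by
        nlinarith [mul_le_mul_of_nonneg_right hsc hspos.le]
      nlinarith [mul_le_mul_of_nonneg_left key1 hK]
    calc g a ≤ (|(f x).1 - (f y).1| + (‖p‖ + ‖q‖) * s) / D := h1
      _ = |(f x).1 - (f y).1| / D + (‖p‖ + ‖q‖) * s / D := by ring
      _ ≤ M := by rw [hM]; exact add_le_add h3 h4
  have hbdd : BddAbove (Set.range g) := by
    refine ⟨M, ?_⟩
    rintro _ ⟨a, rfl⟩
    exact hgM a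
  have hSnn : 0 ≤ ⨆ a, g a := Real.iSup_nonneg hgnonneg
  by_cases hu0 : u = 0
  · have h0 : ‖u‖ = 0 := by simp [hu0]
    rw [h0]
    exact mul_nonneg (by linarith) hc0.le
  · have hun : 0 < ‖u‖ := norm_pos_iff.mpr hu0
    obtain ⟨v, hv⟩ : ∃ v : EuclideanSpace ℝ (Fin d), v = ‖u‖⁻¹ • u := ⟨_, rfl⟩
    have hvn : ‖v‖ = 1 := by
      rw [hv, norm_smul, norm_inv, norm_norm, inv_mul_cancel₀ hun.ne']
    obtain ⟨t, ht⟩ : ∃ t : ℝ, t = c / 2 := ⟨_, rfl⟩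
    obtain ⟨m, hm⟩ : ∃ m : EuclideanSpace ℝ (Fin d), m = (2:ℝ)⁻¹ • (x + y) := ⟨_, rfl⟩
    obtain ⟨a₁, ha₁⟩ : ∃ a : EuclideanSpace ℝ (Fin d), a = m + t • v := ⟨_, rfl⟩
    obtain ⟨a₂, ha₂⟩ : ∃ a : EuclideanSpace ℝ (Fin d), a = m - t • v := ⟨_, rfl⟩
    obtain ⟨w, hw⟩ : ∃ w : EuclideanSpace ℝ (Fin d), w = (2:ℝ)⁻¹ • (x - y) := ⟨_, rfl⟩
    have hwn : ‖w‖ = c / 2 := by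
      rw [hw, norm_smul, ← hc]
      simp only [norm_inv, Real.norm_ofNat]
      ring
    have hzn : ‖t • v‖ = c / 2 := by
      rw [norm_smul, hvn, mul_one, ht]
      exact abs_of_nonneg (by positivity)
    -- denominators at a₁, a₂ equal c^2
    have key : ∀ z : EuclideanSpace ℝ (Fin d), ‖z‖ = c / 2 →
        ‖w - z‖ ^ 2 + ‖-w - z‖ ^ 2 = c ^ 2 := by
      intro z hz
      have h1 : ‖w - z‖ ^ 2 = ‖w‖ ^ 2 - 2 * ⟪w, z⟫ + ‖z‖ ^ 2 := norm_sub_sq_real w z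
      have h2 : ‖-w - z‖ ^ 2 = ‖w + z‖ ^ 2 := by
        rw [show -w - z = -(w + z) by abel, norm_neg]
      have h3 : ‖w + z‖ ^ 2 = ‖w‖ ^ 2 + 2 * ⟪w, z⟫ + ‖z‖ ^ 2 := norm_add_sq_real w z
      rw [h1, h2, h3, hwn, hz]; ring
    have hx1 : x - a₁ = w - t • v := by rw [ha₁, hm, hw]; module
    have hy1 : y - a₁ = -w - t • v := by rw [ha₁, hm, hw]; module
    have hx2 : x - a₂ = w - (-(t • v)) := by rw [ha₂, hm, hw]; module
    have hy2 : y - a₂ = -w - (-(t • v)) := by rw [ha₂, hm, hw]; module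
    have hd1 : ‖x - a₁‖ ^ 2 + ‖y - a₁‖ ^ 2 = c ^ 2 := by
      rw [hx1, hy1]; exact key _ hzn
    have hd2 : ‖x - a₂‖ ^ 2 + ‖y - a₂‖ ^ 2 = c ^ 2 := by
      rw [hx2, hy2]; exact key _ (by rw [norm_neg]; exact hzn)
    -- value difference
    obtain ⟨h₁, hh1⟩ : ∃ r : ℝ, r = eval1 f x a₁ - eval1 f y a₁ := ⟨_, rfl⟩
    obtain ⟨h₂, hh2⟩ : ∃ r : ℝ, r = eval1 f x a₂ - eval1 f y a₂ := ⟨_, rfl⟩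
    have hdiff : h₁ - h₂ = c * ‖u‖ := by
      have e1 : h₁ - h₂ = ⟪u, a₁ - a₂⟫ := by
        rw [hh1, hh2, hu, hp, hq]
        simp only [eval1, inner_sub_left, inner_sub_right]
        ring
      have e2 : a₁ - a₂ = (2 * t * ‖u‖⁻¹) • u := by
        rw [ha₁, ha₂, hv]; module
      rw [e1, e2, real_inner_smul_right, real_inner_self_eq_norm_sq, ht]
      field_simp
    have hS1 : g a₁ ≤ ⨆ a, g a := le_ciSup hbdd a₁
    have hS2 : g a₂ ≤ ⨆ a, g a := le_ciSup hbdd a₂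
    have hg1 : g a₁ = |h₁| / c ^ 2 := by rw [hgval a₁, hd1, hh1]
    have hg2 : g a₂ = |h₂| / c ^ 2 := by rw [hgval a₂, hd2, hh2]
    have habs : c * ‖u‖ ≤ |h₁| + |h₂| := by
      rw [← hdiff]
      calc h₁ - h₂ ≤ |h₁ - h₂| := le_abs_self _
        _ ≤ |h₁| + |h₂| := abs_sub _ _
    have hfin : ‖u‖ / c ≤ 2 * ⨆ a, g a := by
      have h6 := add_le_add hS1 hS2
      rw [hg1, hg2] at h6
      have h5 : (|h₁| + |h₂|) / c ^ 2 ≤ 2 * ⨆ a, g a := by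
        rw [add_div]; linarith
      have h7 : c * ‖u‖ / c ^ 2 ≤ (|h₁| + |h₂|) / c ^ 2 :=
        div_le_div_of_nonneg_right habs (by positivity)
      have h8 : c * ‖u‖ / c ^ 2 = ‖u‖ / c := by
        field_simp
      rw [h8] at h7
      exact h7.trans h5
    exact (div_le_iff₀ hc0).mp hfin

/-- `B(f;x,y) ≤ Γ¹(f;x,y)`: the gradient part of a 1-field is Lipschitz with constant
`Γ¹(f;E)` whenever the latter is finite. -/
theorem grad_lipschitz_of_gamma1 {d : ℕ}
    (E : Set (EuclideanSpace ℝ (Fin d)))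
    (f : EuclideanSpace ℝ (Fin d) → ℝ × EuclideanSpace ℝ (Fin d)) :
    (∀ x ∈ E, ∀ y ∈ E, x ≠ y →
      ‖(f x).2 - (f y).2‖ ≤ gamma1 f x y * ‖x - y‖) ∧
    (gamma1On f E ≠ ⊤ → ∀ x ∈ E, ∀ y ∈ E,
      ‖(f x).2 - (f y).2‖ ≤ (gamma1On f E).toReal * ‖x - y‖) := by
  have main := grad_aux f
  constructor
  · intro x hx y hy hxy
    exact main x y hxy
  · intro hfin x hx y hy
    by_cases hxy : x = y
    · subst hxy; simp
    · have h1 := main x y hxy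
      have hγnn : 0 ≤ gamma1 f x y := by
        nlinarith [norm_nonneg ((f x).2 - (f y).2),
          norm_pos_iff.mpr (sub_ne_zero.mpr hxy : x - y ≠ 0)]
      have h2 : ENNReal.ofReal (gamma1 f x y) ≤ gamma1On f E := by
        unfold gamma1On
        exact le_iSup₂_of_le x hx (le_iSup₂_of_le y hy (le_iSup_of_le hxy le_rfl))
      have h3 : gamma1 f x y ≤ (gamma1On f E).toReal := by
        have h4 := ENNReal.toReal_mono hfin h2
        rwa [ENNReal.toReal_ofReal hγnn] at h4
      exact h1.trans (mul_le_mul_of_nonneg_right h3 (norm_nonneg _))
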